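/- For the choice f(t,s) = t·s/(t+s), the mean E_n of μ_n satisfies E_{n+1} ≤ (5/2)·E_n for every n, and E_n ≤ (89/60)·(5/2)ⁿ for every n ≥ 1. -/

import Mathlib

/-!
Since the parallel resistance `t s / (t + s)` is at most `(t + s) / 4` (AM–HM), taking means in
`X' = A + B + f(C, D)` with i.i.d. `A, B, C, D ∼ μ_n` gives `E_{n+1} = 2 E_n + 𝔼 f(C, D) ≤ 5/2 E_n`.
All `μ_n` are probability measures on `(0, ∞)` with finite mean, which makes these integrals
genuine. Finally `E_1 = 3 + 17/24 = 89/24 = (89/60) (5/2)`, and induction gives the second bound.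
-/

open MeasureTheory Filter

/-- The recursively defined sequence of measures: `μ₀ = (δ₁ + δ₂)/2` and `μ_{n+1}` is the
pushforward of `μ_n ⊗ μ_n ⊗ μ_n ⊗ μ_n` under `(a,b,c,d) ↦ a + b + f c d`. -/
noncomputable def mu (f : ℝ → ℝ → ℝ) : ℕ → Measure ℝ
  | 0 => (2 : ENNReal)⁻¹ • Measure.dirac 1 + (2 : ENNReal)⁻¹ • Measure.dirac 2
  | n + 1 =>
      Measure.map (fun p : ℝ × ℝ × ℝ × ℝ => p.1 + p.2.1 + f p.2.2.1 p.2.2.2)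
        ((mu f n).prod ((mu f n).prod ((mu f n).prod (mu f n))))

/-- The mean of `μ_n`. -/
noncomputable def En (f : ℝ → ℝ → ℝ) (n : ℕ) : ℝ := ∫ x, x ∂(mu f n)

open Function

section Product

variable {μ ν : Measure ℝ} {f : ℝ → ℝ → ℝ}

lemma integrable_uncurry_of_le_mul_add [IsFiniteMeasure μ] [IsFiniteMeasure ν] {C : ℝ}
    (hf : Measurable (uncurry f)) (hf0 : ∀ c d, 0 < c → 0 < d → 0 ≤ f c d)
    (hfC : ∀ c d, 0 < c → 0 < d → f c d ≤ C * (c + d))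
    (hμ : Integrable id μ) (hν : Integrable id ν) (hμ0 : ∀ᵐ x ∂μ, 0 < x)
    (hν0 : ∀ᵐ y ∂ν, 0 < y) :
    Integrable (uncurry f) (μ.prod ν) := by
  have hbound : Integrable (fun q : ℝ × ℝ => C * (q.1 + q.2)) (μ.prod ν) :=
    ((hμ.comp_fst ν).add (hν.comp_snd μ)).const_mul C
  refine hbound.mono' hf.aestronglyMeasurable ?_
  filter_upwards [Measure.quasiMeasurePreserving_fst.ae hμ0,
    Measure.quasiMeasurePreserving_snd.ae hν0] with q hc hd
  rw [Real.norm_eq_abs, abs_of_nonneg (show 0 ≤ uncurry f q from hf0 _ _ hc hd)]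
  exact hfC _ _ hc hd

lemma integral_add_add_prod [IsProbabilityMeasure μ] (hμ : Integrable id μ)
    (hf : Integrable (uncurry f) (μ.prod μ)) :
    ∫ p, p.1 + p.2.1 + f p.2.2.1 p.2.2.2 ∂(μ.prod (μ.prod (μ.prod μ))) =
      2 * ∫ x, x ∂μ + ∫ q, uncurry f q ∂(μ.prod μ) := by
  have h1 : Integrable (fun p : ℝ × ℝ × ℝ × ℝ => p.1) (μ.prod (μ.prod (μ.prod μ))) :=
    hμ.comp_fst _
  have h2 : Integrable (fun p : ℝ × ℝ × ℝ × ℝ => p.2.1) (μ.prod (μ.prod (μ.prod μ))) :=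
    (hμ.comp_fst _).comp_snd μ
  have h3 : Integrable (fun p : ℝ × ℝ × ℝ × ℝ => f p.2.2.1 p.2.2.2)
      (μ.prod (μ.prod (μ.prod μ))) :=
    (hf.comp_snd μ).comp_snd μ
  have h12 : Integrable (fun p : ℝ × ℝ × ℝ × ℝ => p.1 + p.2.1) (μ.prod (μ.prod (μ.prod μ))) :=
    h1.add h2
  rw [integral_add h12 h3, integral_add h1 h2,
    integral_fun_fst (fun x : ℝ => x), integral_fun_snd (fun q : ℝ × ℝ × ℝ => q.1),
    integral_fun_fst (fun x : ℝ => x), integral_fun_snd (fun q : ℝ × ℝ × ℝ => f q.2.1 q.2.2),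
    integral_fun_snd (fun q : ℝ × ℝ => f q.1 q.2)]
  simp only [probReal_univ, one_smul, two_mul]
  rfl

end Product

section Recursion

variable {f : ℝ → ℝ → ℝ}

lemma integrable_mu_zero (g : ℝ → ℝ) : Integrable g (mu f 0) :=
  ((integrable_dirac enorm_lt_top).smul_measure (by simp)).add_measure
    ((integrable_dirac enorm_lt_top).smul_measure (by simp))

lemma integral_mu_zero (g : ℝ → ℝ) : ∫ x, g x ∂mu f 0 = (g 1 + g 2) / 2 := by
  rw [mu, integral_add_measure ((integrable_dirac enorm_lt_top).smul_measure (by simp))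
    ((integrable_dirac enorm_lt_top).smul_measure (by simp)), integral_smul_measure,
    integral_smul_measure, integral_dirac, integral_dirac]
  simp only [ENNReal.toReal_inv, ENNReal.toReal_ofNat, smul_eq_mul]
  ring

lemma measurable_add_add_apply (hf : Measurable (uncurry f)) :
    Measurable (fun p : ℝ × ℝ × ℝ × ℝ => p.1 + p.2.1 + f p.2.2.1 p.2.2.2) :=
  (measurable_fst.add measurable_snd.fst).add (hf.comp measurable_snd.snd)

lemma isProbabilityMeasure_mu (hf : Measurable (uncurry f)) (n : ℕ) :
    IsProbabilityMeasure (mu f n) := by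
  induction n with
  | zero => constructor; simp [mu, ENNReal.inv_two_add_inv_two]
  | succ n ih => exact Measure.isProbabilityMeasure_map (measurable_add_add_apply hf).aemeasurable

lemma ae_pos_mu (hf : Measurable (uncurry f)) (hf0 : ∀ c d, 0 < c → 0 < d → 0 ≤ f c d) (n : ℕ) :
    ∀ᵐ x ∂mu f n, 0 < x := by
  induction n with
  | zero =>
    simp only [mu, ae_add_measure_iff,
      Measure.ae_ennreal_smul_measure_iff (by norm_num : (2 : ENNReal)⁻¹ ≠ 0), ae_dirac_eq,
      eventually_pure]
    norm_num
  | succ n ih =>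
    rw [mu, ae_map_iff (measurable_add_add_apply hf).aemeasurable measurableSet_Ioi]
    filter_upwards [Measure.quasiMeasurePreserving_fst.ae ih,
      Measure.quasiMeasurePreserving_snd.ae (Measure.quasiMeasurePreserving_fst.ae ih),
      Measure.quasiMeasurePreserving_snd.ae (Measure.quasiMeasurePreserving_snd.ae
        (Measure.quasiMeasurePreserving_fst.ae ih)),
      Measure.quasiMeasurePreserving_snd.ae (Measure.quasiMeasurePreserving_snd.ae
        (Measure.quasiMeasurePreserving_snd.ae ih))] with p ha hb hc hd
    exact add_pos_of_pos_of_nonneg (add_pos ha hb) (hf0 _ _ hc hd)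

lemma integrable_mu {C : ℝ} (hf : Measurable (uncurry f))
    (hf0 : ∀ c d, 0 < c → 0 < d → 0 ≤ f c d)
    (hfC : ∀ c d, 0 < c → 0 < d → f c d ≤ C * (c + d)) (n : ℕ) :
    Integrable id (mu f n) := by
  induction n with
  | zero => exact integrable_mu_zero id
  | succ n ih =>
    have := isProbabilityMeasure_mu hf n
    have hμ0 := ae_pos_mu hf hf0 n
    have hF := integrable_uncurry_of_le_mul_add hf hf0 hfC ih ih hμ0 hμ0
    rw [mu, integrable_map_measure aestronglyMeasurable_id
      (measurable_add_add_apply hf).aemeasurable]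
    exact ((ih.comp_fst _).add ((ih.comp_fst _).comp_snd _)).add ((hF.comp_snd _).comp_snd _)

lemma En_succ {C : ℝ} (hf : Measurable (uncurry f))
    (hf0 : ∀ c d, 0 < c → 0 < d → 0 ≤ f c d)
    (hfC : ∀ c d, 0 < c → 0 < d → f c d ≤ C * (c + d)) (n : ℕ) :
    En f (n + 1) = 2 * En f n + ∫ q, uncurry f q ∂(mu f n).prod (mu f n) := by
  have := isProbabilityMeasure_mu hf n
  have hμ := integrable_mu hf hf0 hfC n
  have hμ0 := ae_pos_mu hf hf0 n
  rw [En, mu, integral_map (f := fun x => x) (measurable_add_add_apply hf).aemeasurable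
      aestronglyMeasurable_id,
    integral_add_add_prod hμ (integrable_uncurry_of_le_mul_add hf hf0 hfC hμ hμ hμ0 hμ0), En]

lemma En_succ_le {C : ℝ} (hf : Measurable (uncurry f))
    (hf0 : ∀ c d, 0 < c → 0 < d → 0 ≤ f c d)
    (hfC : ∀ c d, 0 < c → 0 < d → f c d ≤ C * (c + d)) (n : ℕ) :
    En f (n + 1) ≤ 2 * (1 + C) * En f n := by
  have := isProbabilityMeasure_mu hf n
  have hμ := integrable_mu hf hf0 hfC n
  have hμ0 := ae_pos_mu hf hf0 n
  have hF := integrable_uncurry_of_le_mul_add hf hf0 hfC hμ hμ hμ0 hμ0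
  have h1 : Integrable (fun q : ℝ × ℝ => q.1) ((mu f n).prod (mu f n)) := hμ.comp_fst _
  have h2 : Integrable (fun q : ℝ × ℝ => q.2) ((mu f n).prod (mu f n)) := hμ.comp_snd _
  have hbound : ∫ q, uncurry f q ∂(mu f n).prod (mu f n) ≤ 2 * C * En f n := by
    calc ∫ q, uncurry f q ∂(mu f n).prod (mu f n)
        ≤ ∫ q, C * (q.1 + q.2) ∂(mu f n).prod (mu f n) := by
          refine integral_mono_ae hF ((h1.add h2).const_mul C) ?_
          filter_upwards [Measure.quasiMeasurePreserving_fst.ae hμ0,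
            Measure.quasiMeasurePreserving_snd.ae hμ0] with q hc hd
          exact hfC _ _ hc hd
      _ = 2 * C * En f n := by
          rw [integral_const_mul, integral_add h1 h2,
            integral_fun_fst (fun x : ℝ => x), integral_fun_snd (fun x : ℝ => x)]
          simp only [probReal_univ, one_smul, En]
          ring
  rw [En_succ hf hf0 hfC]
  linarith

end Recursion

section Parallel

lemma measurable_uncurry_parallel : Measurable (uncurry fun t s : ℝ => t * s / (t + s)) :=
  (measurable_fst.mul measurable_snd).div (measurable_fst.add measurable_snd)

lemma parallel_nonneg {t s : ℝ} (ht : 0 < t) (hs : 0 < s) : 0 ≤ t * s / (t + s) := by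
  positivity

lemma parallel_le {t s : ℝ} (ht : 0 < t) (hs : 0 < s) : t * s / (t + s) ≤ 1 / 4 * (t + s) := by
  rw [div_le_iff₀ (by positivity)]
  nlinarith [sq_nonneg (t - s)]

lemma En_parallel_one : En (fun t s => t * s / (t + s)) 1 = 89 / 24 := by
  have := isProbabilityMeasure_mu measurable_uncurry_parallel 0
  have hμ := integrable_mu_zero (f := fun t s : ℝ => t * s / (t + s)) id
  have hμ0 := ae_pos_mu measurable_uncurry_parallel (fun _ _ => parallel_nonneg) 0
  rw [En_succ measurable_uncurry_parallel (fun _ _ => parallel_nonneg) (fun _ _ => parallel_le),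
    integral_prod _ (integrable_uncurry_of_le_mul_add measurable_uncurry_parallel
      (fun _ _ => parallel_nonneg) (fun _ _ => parallel_le) hμ hμ hμ0 hμ0)]
  simp only [En, integral_mu_zero, uncurry_apply_pair]
  norm_num

end Parallel

theorem stmt17 :
    (∀ n : ℕ, En (fun t s => t * s / (t + s)) (n + 1) ≤
        (5 / 2) * En (fun t s => t * s / (t + s)) n) ∧
    (∀ n : ℕ, 1 ≤ n → En (fun t s => t * s / (t + s)) n ≤ (89 / 60) * (5 / 2) ^ n) := by
  have step (n : ℕ) : En (fun t s => t * s / (t + s)) (n + 1) ≤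
      (5 / 2) * En (fun t s => t * s / (t + s)) n := by
    convert En_succ_le measurable_uncurry_parallel (fun _ _ => parallel_nonneg)
      (fun _ _ => parallel_le) n using 2
    norm_num
  refine ⟨step, fun n hn => ?_⟩
  induction n, hn using Nat.le_induction with
  | base => rw [En_parallel_one]; norm_num
  | succ n _ ih =>
    calc En (fun t s => t * s / (t + s)) (n + 1)
        ≤ 5 / 2 * En (fun t s => t * s / (t + s)) n := step n
      _ ≤ 5 / 2 * (89 / 60 * (5 / 2) ^ n) := by gcongr
      _ = 89 / 60 * (5 / 2) ^ (n + 1) := by ring
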